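/- arXiv:2307.15937 — 8 statements merged into one kernel-verified Lean document; each statement's English description precedes it below -/
import Mathlib

section
/- There exists a continuous linear operator U on the real Banach space ℓ₁ with operator norm at most 1 such that for every separable real Banach space E and every continuous linear operator f : E → E with operator norm at most 1, there exists a surjective continuous linear operator q : ℓ₁ → E with operator norm at most 1 satisfying f ∘ q = q ∘ U. -/
/-!
`U` is the shift `(n, k) ↦ (n, k + 1)` on `ℓ₁(ℕ × ℕ)`, coded into `ℓ₁(ℕ)` by `Nat.pair`.
Given `f`, choose a sequence `xₙ` dense in the unit ball of `E` and let `q` send the basis vector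
`e₍ₙ,ₖ₎` to `fᵏ xₙ`; then `‖q‖ ≤ 1` and `f ∘ q = q ∘ U`. Every `y` is within `‖y‖ / 2` of the image
of a vector of norm `‖y‖`, so the successive approximation argument of the open mapping theorem
makes `q` onto.
-/

open TopologicalSpace

/-- `ℓ₁` : the real Banach space of summable sequences. -/
noncomputable abbrev ellOne : Type := lp (fun _ : ℕ => ℝ) 1

open Function Metric Set Filter Topology

lemma lp.hasSum_norm_one {ι : Type*} {E : ι → Type*} [∀ i, NormedAddCommGroup (E i)] (a : lp E 1) :
    HasSum (fun i => ‖a i‖) ‖a‖ := by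
  simpa using lp.hasSum_norm (p := 1) (by simp) a

section ExtendZero

variable {ι κ : Type*} {σ : ι → κ}

lemma lp.hasSum_norm_extend_zero (hσ : Injective σ) (a : lp (fun _ : ι => ℝ) 1) :
    HasSum (fun k => ‖extend σ a 0 k‖) ‖a‖ := by
  have : (fun k => ‖extend σ a 0 k‖) = extend σ (fun i => ‖a i‖) 0 := by
    ext k
    rw [apply_extend (fun r : ℝ => ‖r‖)]
    simp [comp_def, Pi.zero_def]
  rw [this, hasSum_extend_zero hσ]
  exact lp.hasSum_norm_one a

noncomputable def lp.extendZero (hσ : Injective σ) :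
    lp (fun _ : ι => ℝ) 1 →ₗᵢ[ℝ] lp (fun _ : κ => ℝ) 1 where
  toFun a := ⟨extend σ a 0, memℓp_gen (by simpa using (lp.hasSum_norm_extend_zero hσ a).summable)⟩
  map_add' a b := by
    ext k
    change extend σ (a + b : ι → ℝ) 0 k = extend σ a 0 k + extend σ b 0 k
    simpa using congrFun (extend_add σ a b 0 0) k
  map_smul' c a := by
    ext k
    change extend σ (c • a : ι → ℝ) 0 k = c • extend σ a 0 k
    simpa using congrFun (extend_smul c σ a 0) k
  norm_map' a := ((lp.hasSum_norm_one _).unique (lp.hasSum_norm_extend_zero hσ a))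

lemma lp.extendZero_apply (hσ : Injective σ) (a : lp (fun _ : ι => ℝ) 1) (k : κ) :
    lp.extendZero hσ a k = extend σ a 0 k := rfl

end ExtendZero

section Synthesis

variable {ι : Type*} {E : Type*} [NormedAddCommGroup E] [NormedSpace ℝ E] {v : ι → E}

lemma norm_smul_le_norm_of_norm_le_one (r : ℝ) {w : E} (hw : ‖w‖ ≤ 1) : ‖r • w‖ ≤ ‖r‖ :=
  (norm_smul_le r w).trans (mul_le_of_le_one_right (norm_nonneg r) hw)

variable [CompleteSpace E]

lemma summable_smul_of_norm_le_one (hv : ∀ i, ‖v i‖ ≤ 1) (a : lp (fun _ : ι => ℝ) 1) :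
    Summable fun i => a i • v i :=
  .of_norm_bounded (lp.hasSum_norm_one a).summable fun i =>
    norm_smul_le_norm_of_norm_le_one _ (hv i)

noncomputable def synthesis (v : ι → E) (hv : ∀ i, ‖v i‖ ≤ 1) : lp (fun _ : ι => ℝ) 1 →L[ℝ] E :=
  LinearMap.mkContinuous
    { toFun a := ∑' i, a i • v i
      map_add' a b := by
        simp only [lp.coeFn_add, Pi.add_apply, add_smul]
        exact (summable_smul_of_norm_le_one hv a).tsum_add (summable_smul_of_norm_le_one hv b)
      map_smul' c a := by
        simp only [lp.coeFn_smul, Pi.smul_apply, smul_eq_mul, ← smul_smul, RingHom.id_apply]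
        exact (summable_smul_of_norm_le_one hv a).tsum_const_smul c }
    1 fun a => by
      rw [one_mul]
      exact tsum_of_norm_bounded (lp.hasSum_norm_one a) fun i =>
        norm_smul_le_norm_of_norm_le_one _ (hv i)

lemma synthesis_apply (hv : ∀ i, ‖v i‖ ≤ 1) (a : lp (fun _ : ι => ℝ) 1) :
    synthesis v hv a = ∑' i, a i • v i := rfl

lemma norm_synthesis_le (hv : ∀ i, ‖v i‖ ≤ 1) : ‖synthesis v hv‖ ≤ 1 :=
  LinearMap.mkContinuous_norm_le _ zero_le_one _

lemma synthesis_single [DecidableEq ι] (hv : ∀ i, ‖v i‖ ≤ 1) (i : ι) (r : ℝ) :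
    synthesis v hv (lp.single 1 i r) = r • v i := by
  rw [synthesis_apply, tsum_eq_single i fun j hj => by rw [lp.single_apply_ne 1 i _ hj, zero_smul],
    lp.single_apply_self]

lemma synthesis_extendZero {σ : ι → ι} (hσ : Injective σ) {f : E →L[ℝ] E}
    (hv : ∀ i, ‖v i‖ ≤ 1) (hvf : ∀ i, v (σ i) = f (v i)) (a : lp (fun _ : ι => ℝ) 1) :
    synthesis v hv (lp.extendZero hσ a) = f (synthesis v hv a) := by
  have hextend : (fun k => extend σ a 0 k • v k) = extend σ (fun i => a i • f (v i)) 0 := by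
    ext k
    by_cases hk : ∃ i, σ i = k
    · obtain ⟨i, rfl⟩ := hk
      simp [hσ.extend_apply, hvf]
    · simp [extend_apply' _ _ _ hk]
  simp only [synthesis_apply, lp.extendZero_apply, hextend, tsum_extend_zero hσ,
    f.map_tsum (summable_smul_of_norm_le_one hv a), map_smul]

end Synthesis

lemma ContinuousLinearMap.surjective_of_approx_preimage {X Y : Type*} [NormedAddCommGroup X]
    [NormedSpace ℝ X] [CompleteSpace X] [NormedAddCommGroup Y] [NormedSpace ℝ Y]
    (T : X →L[ℝ] Y) (C : ℝ) (hT : ∀ y, ∃ x, ‖x‖ ≤ C * ‖y‖ ∧ ‖y - T x‖ ≤ 2⁻¹ * ‖y‖) :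
    Surjective T := by
  choose g hg using hT
  intro y
  -- `r^[n] y` is what is left to hit after `n` corrections by approximate preimages.
  set r : Y → Y := fun z => z - T (g z)
  have hr : ∀ n, ‖r^[n] y‖ ≤ 2⁻¹ ^ n * ‖y‖ := by
    intro n
    induction n with
    | zero => simp
    | succ n ih =>
      rw [iterate_succ_apply', pow_succ, mul_comm _ (2⁻¹ : ℝ), mul_assoc]
      exact (hg _).2.trans (by gcongr)
  have hr_lim : Tendsto (fun n => r^[n] y) atTop (𝓝 0) := by
    refine squeeze_zero_norm hr ?_
    simpa using (tendsto_pow_atTop_nhds_zero_of_lt_one (by norm_num : (0 : ℝ) ≤ 2⁻¹)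
      (by norm_num)).mul_const ‖y‖
  set u : ℕ → X := fun n => g (r^[n] y)
  have hu : Summable u := by
    have hr_sum : Summable fun n => ‖r^[n] y‖ :=
      .of_nonneg_of_le (fun _ => norm_nonneg _) hr
        ((summable_geometric_of_lt_one (by norm_num) (by norm_num)).mul_right ‖y‖)
    exact .of_norm_bounded (hr_sum.mul_left C) fun n => (hg _).1
  have hTu : ∀ n, T (u n) = r^[n] y - r^[n + 1] y := by
    intro n
    rw [iterate_succ_apply']
    simp [r, u]
  have hpartial : Tendsto (fun n => ∑ i ∈ Finset.range n, T (u i)) atTop (𝓝 y) := by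
    simp only [hTu, Finset.sum_range_sub', iterate_zero_apply]
    simpa using tendsto_const_nhds.sub hr_lim
  exact ⟨∑' n, u n, tendsto_nhds_unique (hu.hasSum.mapL T).tendsto_sum_nat hpartial⟩

lemma synthesis_surjective {ι E : Type*} [NormedAddCommGroup E] [NormedSpace ℝ E]
    [CompleteSpace E] {v : ι → E} (hv : ∀ i, ‖v i‖ ≤ 1)
    (hnet : ∀ y : E, ‖y‖ ≤ 1 → ∃ i, ‖y - v i‖ ≤ 2⁻¹) :
    Surjective (synthesis v hv) := by
  classical
  refine (synthesis v hv).surjective_of_approx_preimage 1 fun y => ?_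
  rcases eq_or_ne y 0 with rfl | hy
  · exact ⟨0, by simp⟩
  have hy' : ‖y‖ ≠ 0 := norm_ne_zero_iff.2 hy
  obtain ⟨i, hi⟩ := hnet (‖y‖⁻¹ • y) (by rw [norm_smul, norm_inv, norm_norm, inv_mul_cancel₀ hy'])
  refine ⟨lp.single 1 i ‖y‖, by simp [lp.norm_single], ?_⟩
  calc ‖y - synthesis v hv (lp.single 1 i ‖y‖)‖ = ‖‖y‖ • (‖y‖⁻¹ • y - v i)‖ := by
        rw [synthesis_single, smul_sub, smul_inv_smul₀ hy']
    _ = ‖y‖ * ‖‖y‖⁻¹ • y - v i‖ := by rw [norm_smul, norm_norm]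
    _ ≤ 2⁻¹ * ‖y‖ := by rw [mul_comm]; gcongr

lemma exists_seq_range_subset_dense_of_nonempty {X : Type*} [TopologicalSpace X]
    [PseudoMetrizableSpace X] [SeparableSpace X] {s : Set X} (hs : s.Nonempty) :
    ∃ x : ℕ → X, range x ⊆ s ∧ s ⊆ closure (range x) := by
  obtain ⟨t, hts, htc, hst⟩ := (IsSeparable.of_separableSpace s).exists_countable_dense_subset
  have ht : t.Nonempty := by
    by_contra h
    simpa [not_nonempty_iff_eq_empty.1 h] using hs.mono hst
  obtain ⟨x, rfl⟩ := htc.exists_eq_range ht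
  exact ⟨x, hts, hst⟩

def pairShift (m : ℕ) : ℕ := Nat.pair m.unpair.1 (m.unpair.2 + 1)

lemma pairShift_injective : Injective pairShift := by
  intro a b h
  obtain ⟨h₁, h₂⟩ := Nat.pair_eq_pair.1 h
  rw [← Nat.pair_unpair a, ← Nat.pair_unpair b, h₁, Nat.succ_injective h₂]

section Orbit

variable {E : Type*} (f : E → E) (x : ℕ → E)

def orbitFamily (m : ℕ) : E := f^[m.unpair.2] (x m.unpair.1)

lemma orbitFamily_pairShift (m : ℕ) : orbitFamily f x (pairShift m) = f (orbitFamily f x m) := by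
  simp [orbitFamily, pairShift, iterate_succ_apply']

lemma orbitFamily_pair_zero (n : ℕ) : orbitFamily f x (Nat.pair n 0) = x n := by
  simp [orbitFamily]

lemma norm_orbitFamily_le [NormedAddCommGroup E] [NormedSpace ℝ E] {f : E →L[ℝ] E} (hf : ‖f‖ ≤ 1)
    {x : ℕ → E} (hx : ∀ n, ‖x n‖ ≤ 1) (m : ℕ) : ‖orbitFamily f x m‖ ≤ 1 := by
  suffices ∀ k z, ‖f^[k] z‖ ≤ ‖z‖ from (this _ _).trans (hx _)
  intro k z
  induction k with
  | zero => rfl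
  | succ k ih =>
    rw [iterate_succ_apply']
    exact (f.le_of_opNorm_le hf _).trans (by simpa using ih)

end Orbit

/-- There exists a nonexpansive continuous linear operator `U` on `ℓ₁` such that every
nonexpansive continuous linear operator `f` on a separable real Banach space `E` lifts to
`U` via a surjective nonexpansive continuous linear operator `q : ℓ₁ → E`. -/
theorem exists_surjectively_universal_operator :
    ∃ U : ellOne →L[ℝ] ellOne, ‖U‖ ≤ 1 ∧
      ∀ (E : Type) [NormedAddCommGroup E] [NormedSpace ℝ E] [CompleteSpace E]
        [SeparableSpace E] (f : E →L[ℝ] E), ‖f‖ ≤ 1 →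
        ∃ q : ellOne →L[ℝ] E, Function.Surjective q ∧ ‖q‖ ≤ 1 ∧
          ∀ x : ellOne, f (q x) = q (U x) := by
  refine ⟨(lp.extendZero pairShift_injective).toContinuousLinearMap,
    LinearIsometry.norm_toContinuousLinearMap_le _, fun E _ _ _ _ f hf => ?_⟩
  obtain ⟨x, hx_ball, hx_dense⟩ :=
    exists_seq_range_subset_dense_of_nonempty (nonempty_closedBall (x := (0 : E)).2 zero_le_one)
  have hx : ∀ n, ‖x n‖ ≤ 1 := fun n => mem_closedBall_zero_iff.1 (hx_ball (mem_range_self n))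
  have hv := norm_orbitFamily_le hf hx
  have hnet : ∀ y : E, ‖y‖ ≤ 1 → ∃ m, ‖y - orbitFamily f x m‖ ≤ 2⁻¹ := by
    intro y hy
    obtain ⟨n, hn⟩ := mem_closure_range_iff.1 (hx_dense (mem_closedBall_zero_iff.2 hy)) 2⁻¹
      (by norm_num)
    exact ⟨Nat.pair n 0, by rw [orbitFamily_pair_zero, ← dist_eq_norm]; exact hn.le⟩
  exact ⟨synthesis _ hv, synthesis_surjective hv hnet, norm_synthesis_le hv, fun a =>
    (synthesis_extendZero pairShift_injective hv (orbitFamily_pairShift f x) a).symm⟩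
end

section
/- Let E be a separable real Banach space and let f : E → E be a continuous linear operator with operator norm at most 1. Then there exist a map φ : ℕ → ℕ, a continuous linear operator T : ℓ₁ → ℓ₁ satisfying T e_n = e_{φ(n)} for every n ∈ ℕ, and a surjective continuous linear operator q : ℓ₁ → E of norm at most 1 such that f ∘ q = q ∘ T. -/
/-!
Choose a sequence `s` dense in the closed unit ball of `E` and enumerate all orbits `f^[k] (s n)`
as a single sequence `d`, which stays in the unit ball because `‖f‖ ≤ 1`. The operator
`q : ℓ₁ → E` with `q eₘ = d m` has norm at most `1`, and `f ∘ q = q ∘ T` for the basic operator `T`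
moving each `eₘ` one step along its orbit. As `q` maps the unit ball of `ℓ₁` onto a dense subset of
the unit ball of `E`, the successive approximation argument of the open mapping theorem shows that
`q` is onto.
-/

open TopologicalSpace

open Function Filter Topology Metric Set
open scoped lp ENNReal

namespace lp

variable {ι 𝕜 F : Type*} [NontriviallyNormedField 𝕜] [NormedAddCommGroup F] [NormedSpace 𝕜 F]

theorem summable_norm_of_one (x : ℓ¹(ι, 𝕜)) : Summable fun i => ‖x i‖ := by
  simpa using (lp.memℓp x).summable (by norm_num)

theorem norm_eq_tsum_norm_of_one (x : ℓ¹(ι, 𝕜)) : ‖x‖ = ∑' i, ‖x i‖ := by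
  simpa using (lp.hasSum_norm (by norm_num) x).tsum_eq.symm

theorem summable_norm_smul_of_one (x : ℓ¹(ι, 𝕜)) {d : ι → F} {C : ℝ} (hd : ∀ i, ‖d i‖ ≤ C) :
    Summable fun i => ‖x i • d i‖ :=
  .of_nonneg_of_le (fun _ => norm_nonneg _)
    (fun i => by rw [norm_smul]; exact mul_le_mul_of_nonneg_left (hd i) (norm_nonneg _))
    ((summable_norm_of_one x).mul_right C)

variable [CompleteSpace F]

noncomputable def tsumSmulCLM (d : ι → F) {C : ℝ} (hd : ∀ i, ‖d i‖ ≤ C) : ℓ¹(ι, 𝕜) →L[𝕜] F :=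
  LinearMap.mkContinuous
    { toFun x := ∑' i, x i • d i
      map_add' x y := by
        simp only [coeFn_add, Pi.add_apply, add_smul]
        exact (summable_norm_smul_of_one x hd).of_norm.tsum_add
          (summable_norm_smul_of_one y hd).of_norm
      map_smul' c x := by
        simp only [coeFn_smul, Pi.smul_apply, smul_eq_mul, mul_smul, RingHom.id_apply]
        exact (summable_norm_smul_of_one x hd).of_norm.tsum_const_smul c }
    C fun x => calc
      ‖∑' i, x i • d i‖ ≤ ∑' i, ‖x i • d i‖ :=
          norm_tsum_le_tsum_norm (summable_norm_smul_of_one x hd)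
      _ ≤ ∑' i, ‖x i‖ * C := by
        refine (summable_norm_smul_of_one x hd).tsum_le_tsum (fun i => ?_)
          ((summable_norm_of_one x).mul_right C)
        rw [norm_smul]; exact mul_le_mul_of_nonneg_left (hd i) (norm_nonneg _)
      _ = C * ‖x‖ := by rw [tsum_mul_right, norm_eq_tsum_norm_of_one, mul_comm]

theorem tsumSmulCLM_single [DecidableEq ι] (d : ι → F) {C : ℝ} (hd : ∀ i, ‖d i‖ ≤ C) (i : ι)
    (c : 𝕜) :
    tsumSmulCLM d hd (lp.single 1 i c) = c • d i := by
  simp only [tsumSmulCLM, LinearMap.mkContinuous_apply, LinearMap.coe_mk, AddHom.coe_mk,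
    lp.single_apply]
  rw [tsum_eq_single i fun j hj => by rw [Pi.single_eq_of_ne hj, zero_smul], Pi.single_eq_same]

theorem norm_tsumSmulCLM_le (d : ι → F) {C : ℝ} (hd : ∀ i, ‖d i‖ ≤ C) (hC : 0 ≤ C) :
    ‖(tsumSmulCLM d hd : ℓ¹(ι, 𝕜) →L[𝕜] F)‖ ≤ C :=
  LinearMap.mkContinuous_norm_le _ hC _

theorem ext_single_one [DecidableEq ι] {p : ℝ≥0∞} [Fact (1 ≤ p)] (hp : p ≠ ⊤) {G : Type*}
    [AddCommMonoid G] [Module 𝕜 G] [TopologicalSpace G] [T2Space G] {A B : ℓ^p(ι, 𝕜) →L[𝕜] G}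
    (h : ∀ i, A (lp.single p i 1) = B (lp.single p i 1)) : A = B :=
  lp.ext_continuousLinearMap hp fun i => ContinuousLinearMap.ext_ring (h i)

section BasicOperator

variable [CompleteSpace 𝕜] [DecidableEq ι]

noncomputable def basicOperator (φ : ι → ι) : ℓ¹(ι, 𝕜) →L[𝕜] ℓ¹(ι, 𝕜) :=
  tsumSmulCLM (fun i => lp.single 1 (φ i) (1 : 𝕜))
    fun i => by rw [lp.norm_single zero_lt_one, norm_one]

theorem basicOperator_single (φ : ι → ι) (i : ι) :
    basicOperator φ (lp.single 1 i (1 : 𝕜)) = lp.single 1 (φ i) 1 := by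
  rw [basicOperator, tsumSmulCLM_single, one_smul]

theorem comp_tsumSmulCLM_eq_tsumSmulCLM_comp_basicOperator (g : F →L[𝕜] F) (φ : ι → ι)
    {d : ι → F} {C : ℝ} (hd : ∀ i, ‖d i‖ ≤ C) (hgd : ∀ i, g (d i) = d (φ i)) :
    g ∘L tsumSmulCLM d hd = (tsumSmulCLM d hd : ℓ¹(ι, 𝕜) →L[𝕜] F) ∘L basicOperator φ :=
  ext_single_one ENNReal.one_ne_top fun i => by
    simp only [ContinuousLinearMap.comp_apply, basicOperator_single, tsumSmulCLM_single, one_smul,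
      hgd]

end BasicOperator

end lp

section ApproximatePreimage

variable {𝕜 E F : Type*} [NontriviallyNormedField 𝕜] [NormedAddCommGroup E] [NormedSpace 𝕜 E]
  [NormedAddCommGroup F] [NormedSpace 𝕜 F]

theorem ContinuousLinearMap.surjective_of_forall_approx_preimage [CompleteSpace E]
    (f : E →L[𝕜] F) {C : ℝ} (h : ∀ y, ∃ x, ‖y - f x‖ ≤ 1 / 2 * ‖y‖ ∧ ‖x‖ ≤ C * ‖y‖) :
    Surjective f := by
  choose g hg using h
  intro y
  -- `r n` is what is left of `y` after `n` correction steps `z ↦ z - f (g z)`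
  set r : ℕ → F := fun n => (fun z => z - f (g z))^[n] y
  have hr_succ (n : ℕ) : r (n + 1) = r n - f (g (r n)) := iterate_succ_apply' _ _ _
  have hr_norm (n : ℕ) : ‖r n‖ ≤ (1 / 2) ^ n * ‖y‖ := by
    induction n with
    | zero => simp [r]
    | succ n ih => calc
        ‖r (n + 1)‖ ≤ 1 / 2 * ‖r n‖ := hr_succ n ▸ (hg _).1
        _ ≤ (1 / 2) ^ (n + 1) * ‖y‖ := by rw [pow_succ', mul_assoc]; gcongr
  have hr_summable : Summable fun n => ‖r n‖ :=
    .of_nonneg_of_le (fun _ => norm_nonneg _) hr_norm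
      (summable_geometric_two.mul_right ‖y‖)
  have hgr_summable : Summable fun n => g (r n) :=
    .of_norm_bounded (hr_summable.mul_left C) fun n => (hg _).2
  have hpartial (n : ℕ) : f (∑ k ∈ Finset.range n, g (r k)) = y - r n := by
    induction n with
    | zero => simp [r]
    | succ n ih => rw [Finset.sum_range_succ, map_add, ih, hr_succ]; abel
  have hr_tendsto : Tendsto r atTop (𝓝 0) :=
    squeeze_zero_norm hr_norm <| by
      simpa using (tendsto_pow_atTop_nhds_zero_of_lt_one (r := (1 / 2 : ℝ)) (by norm_num)
        (by norm_num)).mul_const ‖y‖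
  refine ⟨∑' n, g (r n), tendsto_nhds_unique ((f.continuous.tendsto _).comp
    hgr_summable.hasSum.tendsto_sum_nat) ?_⟩
  simpa [comp_def, hpartial] using (tendsto_const_nhds (x := y)).sub hr_tendsto

end ApproximatePreimage

theorem ContinuousLinearMap.surjective_of_closedBall_subset_closure_image {E F : Type*}
    [NormedAddCommGroup E] [NormedSpace ℝ E] [CompleteSpace E] [NormedAddCommGroup F]
    [NormedSpace ℝ F] (f : E →L[ℝ] F) {C : ℝ}
    (h : closedBall (0 : F) 1 ⊆ closure (f '' closedBall 0 C)) : Surjective f := by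
  refine f.surjective_of_forall_approx_preimage (C := C) fun y => ?_
  rcases eq_or_ne y 0 with rfl | hy
  · exact ⟨0, by simp⟩
  have hy' : 0 < ‖y‖ := norm_pos_iff.2 hy
  obtain ⟨_, ⟨x, hx, rfl⟩, hxy⟩ := Metric.mem_closure_iff.1
    (h (show ‖y‖⁻¹ • y ∈ closedBall 0 1 by simp [norm_smul, hy'.ne'])) (1 / 2) (by norm_num)
  refine ⟨‖y‖ • x, ?_, ?_⟩
  · calc ‖y - f (‖y‖ • x)‖ = ‖‖y‖ • (‖y‖⁻¹ • y - f x)‖ := by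
          rw [smul_sub, smul_inv_smul₀ hy'.ne', map_smul]
      _ = ‖y‖ * dist (‖y‖⁻¹ • y) (f x) := by rw [norm_smul, norm_norm, dist_eq_norm]
      _ ≤ 1 / 2 * ‖y‖ := by rw [mul_comm]; gcongr
  · rw [norm_smul, norm_norm, mul_comm]
    gcongr
    simpa using hx

theorem exists_seq_range_subset_subset_closure {X : Type*} [TopologicalSpace X]
    [PseudoMetrizableSpace X] {S : Set X} (hS : IsSeparable S) (hne : S.Nonempty) :
    ∃ u : ℕ → X, range u ⊆ S ∧ S ⊆ closure (range u) := by
  obtain ⟨t, htS, htc, hSt⟩ := hS.exists_countable_dense_subset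
  obtain ⟨u, rfl⟩ := htc.exists_eq_range (closure_nonempty_iff.1 (hne.mono hSt))
  exact ⟨u, htS, hSt⟩

theorem norm_iterate_apply_le {E : Type*} [Norm E] {f : E → E} (hf : ∀ x, ‖f x‖ ≤ ‖x‖) (k : ℕ)
    (x : E) : ‖f^[k] x‖ ≤ ‖x‖ := by
  induction k with
  | zero => rfl
  | succ k ih => rw [iterate_succ_apply']; exact (hf _).trans ih

section Orbit

variable {X : Type*} (g : X → X) (s : ℕ → X)

/-- All orbits of `s` under `g` in one sequence: `orbitSeq g s (Nat.pair n k) = g^[k] (s n)`. -/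
def orbitSeq (m : ℕ) : X := g^[m.unpair.2] (s m.unpair.1)

def orbitShift (m : ℕ) : ℕ := Nat.pair m.unpair.1 (m.unpair.2 + 1)

theorem apply_orbitSeq (m : ℕ) : g (orbitSeq g s m) = orbitSeq g s (orbitShift m) := by
  simp only [orbitSeq, orbitShift, Nat.unpair_pair, iterate_succ_apply']

theorem orbitSeq_pair_zero (n : ℕ) : orbitSeq g s (Nat.pair n 0) = s n := by
  simp [orbitSeq]

end Orbit

/-- Every nonexpansive continuous linear operator on a separable real Banach space lifts,
via a surjective nonexpansive operator `q : ℓ₁ → E`, to a *basic* operator `T` on `ℓ₁`,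
i.e. one satisfying `T eₙ = e_{φ n}` for some `φ : ℕ → ℕ`, where `eₙ = lp.single 1 n 1`. -/
theorem lifts_to_basic_operator (E : Type) [NormedAddCommGroup E] [NormedSpace ℝ E]
    [CompleteSpace E] [SeparableSpace E] (f : E →L[ℝ] E) (hf : ‖f‖ ≤ 1) :
    ∃ (φ : ℕ → ℕ) (T : ellOne →L[ℝ] ellOne) (q : ellOne →L[ℝ] E),
      (∀ n : ℕ, T (lp.single 1 n (1 : ℝ)) = lp.single 1 (φ n) (1 : ℝ)) ∧
      Function.Surjective q ∧ ‖q‖ ≤ 1 ∧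
      ∀ x : ellOne, f (q x) = q (T x) := by
  obtain ⟨s, hs_ball, hs_dense⟩ := exists_seq_range_subset_subset_closure
    (.of_separableSpace (closedBall (0 : E) 1)) (nonempty_closedBall.2 zero_le_one)
  have hd_norm (m : ℕ) : ‖orbitSeq f s m‖ ≤ 1 :=
    (norm_iterate_apply_le (fun x => (f.le_of_opNorm_le hf x).trans_eq (one_mul _)) _ _).trans
      (mem_closedBall_zero_iff.1 (hs_ball (mem_range_self _)))
  set q : ellOne →L[ℝ] E := lp.tsumSmulCLM (orbitSeq f s) hd_norm
  have hfq := lp.comp_tsumSmulCLM_eq_tsumSmulCLM_comp_basicOperator f orbitShift hd_norm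
    (apply_orbitSeq f s)
  refine ⟨orbitShift, lp.basicOperator orbitShift, q, lp.basicOperator_single _, ?_,
    lp.norm_tsumSmulCLM_le _ _ zero_le_one, fun x => congr($hfq x)⟩
  refine q.surjective_of_closedBall_subset_closure_image (C := 1) (hs_dense.trans (closure_mono ?_))
  rintro _ ⟨n, rfl⟩
  exact ⟨lp.single 1 (Nat.pair n 0) 1, by simp [lp.norm_single],
    by rw [lp.tsumSmulCLM_single, one_smul, orbitSeq_pair_zero]⟩
end

section
/- Let V : ℓ₁(ℕ × ℕ) → ℓ₁(ℕ × ℕ) be a continuous linear operator satisfying V e_{(m,n)} = e_{(m+1,n)} for all (m, n) ∈ ℕ × ℕ. Then V is surjectively universal in the category of separable Banach spaces: for every separable real Banach space E and every continuous linear operator f : E → E with operator norm at most 1, there exists a surjective continuous linear operator q : ℓ₁(ℕ × ℕ) → E with operator norm at most 1 such that f ∘ q = q ∘ V. -/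
/-!
Choose `v n` dense in the closed unit ball of `E` and let `q` send `e_{(m,n)}` to `f^m (v n)`.
Since `‖f‖ ≤ 1` these vectors lie in the unit ball, so `q` is a contraction on `ℓ¹`, and
`f ∘ q = q ∘ V` because both sides send `e_{(m,n)}` to `f^(m+1) (v n)`. Already the vectors
`q e_{(0,n)} = v n` approximate every `y` to within `‖y‖ / 2` by the image of a vector of norm
`‖y‖`; approximating the successive errors in the same way produces an absolutely summable
preimage of `y`.
-/

open TopologicalSpace Metric Filter Topology
open scoped lp

namespace ContinuousLinearMap

variable {𝕜 E F : Type*} [NontriviallyNormedField 𝕜]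
  [NormedAddCommGroup E] [NormedSpace 𝕜 E] [NormedAddCommGroup F] [NormedSpace 𝕜 F]

theorem norm_pow_le_one {f : E →L[𝕜] E} (hf : ‖f‖ ≤ 1) : ∀ m : ℕ, ‖f ^ m‖ ≤ 1
  | 0 => norm_id_le
  | m + 1 => by
    rw [pow_succ]
    exact (norm_mul_le _ _).trans (mul_le_one₀ (norm_pow_le_one hf m) (norm_nonneg _) hf)

theorem surjective_of_forall_exists_norm_sub_le_half [CompleteSpace E] (T : E →L[𝕜] F)
    {C : ℝ} (h : ∀ y, ∃ x, ‖x‖ ≤ C * ‖y‖ ∧ ‖y - T x‖ ≤ ‖y‖ / 2) : Function.Surjective T := by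
  intro y
  choose a ha using h
  set r : F → F := fun z => z - T (a z)
  have hr : ∀ n, ‖r^[n] y‖ ≤ (1 / 2) ^ n * ‖y‖ := by
    intro n
    induction n with
    | zero => simp
    | succ n ih =>
      rw [Function.iterate_succ_apply', pow_succ]
      linarith [(ha (r^[n] y)).2]
  set u : ℕ → E := fun n => a (r^[n] y)
  have hu : Summable u := by
    refine .of_norm_bounded ((summable_geometric_two.mul_right ‖y‖).mul_left (max C 0))
      fun n => ?_
    calc ‖u n‖ ≤ C * ‖r^[n] y‖ := (ha _).1
      _ ≤ max C 0 * ‖r^[n] y‖ := by gcongr; exact le_max_left C 0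
      _ ≤ max C 0 * ((1 / 2) ^ n * ‖y‖) := by gcongr; exact hr n
  have hpartial : ∀ n, T (∑ i ∈ Finset.range n, u i) = y - r^[n] y := by
    intro n
    induction n with
    | zero => simp
    | succ n ih =>
      rw [Finset.sum_range_succ, map_add, ih, Function.iterate_succ_apply']
      simp only [r, u]
      abel
  have hrem : Tendsto (fun n => r^[n] y) atTop (𝓝 0) := by
    refine squeeze_zero_norm hr ?_
    simpa using (tendsto_pow_atTop_nhds_zero_of_lt_one (r := (1 / 2 : ℝ)) (by norm_num)
      (by norm_num)).mul_const ‖y‖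
  refine ⟨∑' n, u n,
    tendsto_nhds_unique ((T.continuous.tendsto _).comp hu.hasSum.tendsto_sum_nat) ?_⟩
  simpa [Function.comp_def, hpartial] using (tendsto_const_nhds (x := y)).sub hrem

end ContinuousLinearMap

namespace lp

variable {ι : Type*} {K : ℝ}

section Synthesis

variable {𝕜 E : Type*} [NontriviallyNormedField 𝕜] [NormedAddCommGroup E] [NormedSpace 𝕜 E]
  [CompleteSpace E] {g : ι → E}

variable (g) in
noncomputable def synthesisCLM (hK : 0 ≤ K) (hg : ∀ i, ‖g i‖ ≤ K) :
    ℓ¹(ι, 𝕜) →L[𝕜] E :=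
  tsumCLM 𝕜 ι E ∘L
    mapCLM 1 (fun i => ContinuousLinearMap.toSpanSingleton 𝕜 (g i)) hK (by simpa using hg)

theorem synthesisCLM_single [DecidableEq ι] (hK : 0 ≤ K) (hg : ∀ i, ‖g i‖ ≤ K) (i : ι)
    (c : 𝕜) :
    synthesisCLM g hK hg (lp.single 1 i c) = c • g i := by
  simp only [synthesisCLM, ContinuousLinearMap.comp_apply, tsumCLM_apply, mapCLM_apply_coe,
    lp.single_apply, ContinuousLinearMap.toSpanSingleton_apply]
  rw [tsum_eq_single i fun j hj => by simp [hj], Pi.single_eq_same]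

theorem norm_synthesisCLM_le (hK : 0 ≤ K) (hg : ∀ i, ‖g i‖ ≤ K) :
    ‖synthesisCLM (𝕜 := 𝕜) g hK hg‖ ≤ K :=
  (ContinuousLinearMap.opNorm_comp_le _ _).trans <| by
    simpa using mul_le_mul_of_nonneg_right norm_tsumCLM_le (norm_nonneg _) |>.trans
      (by simpa using norm_mapCLM_le 1 _ hK _)

end Synthesis

theorem synthesisCLM_surjective {E : Type*} [NormedAddCommGroup E] [NormedSpace ℝ E]
    [CompleteSpace E] {g : ι → E} (hK : 0 ≤ K) (hg : ∀ i, ‖g i‖ ≤ K)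
    (hdense : closedBall 0 1 ⊆ closure (Set.range g)) :
    Function.Surjective (synthesisCLM (𝕜 := ℝ) g hK hg) := by
  classical
  refine ContinuousLinearMap.surjective_of_forall_exists_norm_sub_le_half _ (C := 1)
    fun y => ?_
  rcases eq_or_ne y 0 with rfl | hy
  · exact ⟨0, by simp⟩
  have hy' : ‖y‖ ≠ 0 := norm_ne_zero_iff.2 hy
  have hunit : ‖y‖⁻¹ • y ∈ closedBall 0 1 := by
    rw [mem_closedBall_zero_iff, norm_smul, norm_inv, norm_norm, inv_mul_cancel₀ hy']
  obtain ⟨i, hi⟩ := mem_closure_range_iff.1 (hdense hunit) (1 / 2) one_half_pos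
  have hsplit : y - ‖y‖ • g i = ‖y‖ • (‖y‖⁻¹ • y - g i) := by
    rw [smul_sub, smul_inv_smul₀ hy']
  refine ⟨lp.single 1 i ‖y‖, by simp [lp.norm_single], ?_⟩
  calc ‖y - synthesisCLM g hK hg (lp.single 1 i ‖y‖)‖
      = ‖y‖ * dist (‖y‖⁻¹ • y) (g i) := by
        rw [synthesisCLM_single, hsplit, norm_smul, norm_norm, dist_eq_norm]
    _ ≤ ‖y‖ * (1 / 2) := by gcongr
    _ = ‖y‖ / 2 := by ring

end lp

/-- A continuous linear operator `V` on `ℓ₁(ℕ × ℕ)` sending the basic vector `e_{(m,n)}` to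
`e_{(m+1,n)}` is surjectively universal: every nonexpansive continuous linear operator on a
separable real Banach space lifts to it via a surjective nonexpansive operator. -/
theorem basic_shift_operator_universal
    (V : lp (fun _ : ℕ × ℕ => ℝ) 1 →L[ℝ] lp (fun _ : ℕ × ℕ => ℝ) 1)
    (hV : ∀ mn : ℕ × ℕ, V (lp.single 1 mn (1 : ℝ)) = lp.single 1 (mn.1 + 1, mn.2) (1 : ℝ)) :
    ∀ (E : Type) [NormedAddCommGroup E] [NormedSpace ℝ E] [CompleteSpace E]
      [SeparableSpace E] (f : E →L[ℝ] E), ‖f‖ ≤ 1 →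
      ∃ q : lp (fun _ : ℕ × ℕ => ℝ) 1 →L[ℝ] E, Function.Surjective q ∧ ‖q‖ ≤ 1 ∧
        ∀ x, f (q x) = q (V x) := by
  intro E _ _ _ _ f hf
  obtain ⟨v, hv⟩ := exists_dense_seq (closedBall (0 : E) 1)
  let g : ℕ × ℕ → E := fun mn => (f ^ mn.1) (v mn.2)
  have hg : ∀ mn, ‖g mn‖ ≤ 1 := fun mn =>
    ((f ^ mn.1).le_of_opNorm_le_of_le (f.norm_pow_le_one hf mn.1)
      (mem_closedBall_zero_iff.1 (v mn.2).2)).trans_eq (one_mul 1)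
  have hdense : closedBall 0 1 ⊆ closure (Set.range g) := by
    refine (Subtype.dense_iff.1 hv).trans (closure_mono ?_)
    rintro _ ⟨_, ⟨n, rfl⟩, rfl⟩
    exact ⟨(0, n), by simp [g]⟩
  let q := lp.synthesisCLM (𝕜 := ℝ) g zero_le_one hg
  have hcomm : f ∘L q = q ∘L V :=
    lp.ext_continuousLinearMap ENNReal.one_ne_top fun mn => ContinuousLinearMap.ext_ring <| by
      simp only [ContinuousLinearMap.comp_apply, lp.singleContinuousLinearMap_apply, hV, q,
        lp.synthesisCLM_single, one_smul, g, pow_succ']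
      rfl
  exact ⟨q, lp.synthesisCLM_surjective _ _ hdense, lp.norm_synthesisCLM_le _ _,
    fun x => congr($hcomm x)⟩
end

section
/- Let I be a nonempty set and let ν_I : ℕ × I → ℕ × I be the map ν_I(n, α) = (n + 1, α). Then for every nonempty set S admitting a surjection from I (equivalently, of cardinality at most that of I) and every map f : S → S, there exists a surjection q : ℕ × I → S such that q ∘ ν_I = f ∘ q. -/
/-- For a nonempty index set `I`, the shift `ν_I (n, α) = (n + 1, α)` on `ℕ × I` surjectively
lifts every self-map of a nonempty set `S` admitting a surjection from `I`. -/
theorem shift_universal_for_density (I : Type*) [Nonempty I] (S : Type*) [Nonempty S]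
    (hS : ∃ g : I → S, Function.Surjective g) (f : S → S) :
    ∃ q : ℕ × I → S, Function.Surjective q ∧
      q ∘ (fun x : ℕ × I => (x.1 + 1, x.2)) = f ∘ q := by
  obtain ⟨g, hg⟩ := hS
  refine ⟨fun x => f^[x.1] (g x.2), fun s => ?_, ?_⟩
  · obtain ⟨i, hi⟩ := hg s
    exact ⟨(0, i), hi⟩
  · funext x
    simp [Function.iterate_succ_apply']
end

section
/- There exists a continuous linear operator U : ℓ₁ → ℓ₁ which is an isometric involution (U ∘ U = id and ‖U x‖ = ‖x‖ for all x) such that for every separable real Banach space E and every continuous linear isometric involution f : E → E (f ∘ f = id and ‖f x‖ = ‖x‖ for all x), there exists a surjective continuous linear operator q : ℓ₁ → E with operator norm at most 1 satisfying f ∘ q = q ∘ U. -/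
/-!
Let `U` swap the coordinates `2k` and `2k + 1` of `ℓ₁`. Given `E` and `f`, pick a sequence `d`
dense in the closed unit ball of `E` and put `z (2k) = d k`, `z (2k + 1) = f (d k)`. The operator
`q x = ∑ xₙ • z n` has norm at most `1`, and it intertwines `U` with `f` because `f` is an
involution. The image under `q` of the unit ball of `ℓ₁` contains every `z n`, so it is dense in
the unit ball of `E`; the successive approximation argument of the open mapping theorem upgrades
this to surjectivity, since `ℓ₁` is complete.
-/

open TopologicalSpace

open Set Metric Filter Topology Function
open scoped lp

theorem TopologicalSpace.IsSeparable.exists_seq_dense_subset {X : Type*} [TopologicalSpace X]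
    [PseudoMetrizableSpace X] {s : Set X} (hs : IsSeparable s) (hne : s.Nonempty) :
    ∃ u : ℕ → X, range u ⊆ s ∧ s ⊆ closure (range u) := by
  obtain ⟨t, hts, htc, hst⟩ := hs.exists_countable_dense_subset
  obtain ⟨u, rfl⟩ := htc.exists_eq_range (closure_nonempty_iff.1 (hne.mono hst))
  exact ⟨u, hts, hst⟩

namespace ContinuousLinearMap

variable {𝕜 E F : Type*} [NormedAddCommGroup E] [NormedAddCommGroup F] [CompleteSpace F]

theorem surjective_of_exists_approx_preimage [NormedField 𝕜] [NormedSpace 𝕜 E]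
    [NormedSpace 𝕜 F] (T : F →L[𝕜] E) {C : ℝ} (hC : 0 ≤ C)
    (h : ∀ y, ∃ x, ‖y - T x‖ ≤ ‖y‖ / 2 ∧ ‖x‖ ≤ C * ‖y‖) : Surjective T := by
  choose g hg_approx hg_norm using h
  intro y
  -- `r n` is what is left of `y` after `n` rounds of approximation
  set r : ℕ → E := fun n => (fun v => v - T (g v))^[n] y
  have hr_succ (n : ℕ) : r (n + 1) = r n - T (g (r n)) := iterate_succ_apply' _ _ _
  have hr_norm (n : ℕ) : ‖r n‖ ≤ (1 / 2) ^ n * ‖y‖ := by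
    induction n with
    | zero => simp [r]
    | succ n ih =>
      rw [hr_succ, pow_succ]
      linarith [hg_approx (r n)]
  have hsum : Summable fun n => g (r n) := by
    refine .of_norm_bounded (summable_geometric_two.mul_left (C * ‖y‖)) fun n => ?_
    calc ‖g (r n)‖ ≤ C * ‖r n‖ := hg_norm _
      _ ≤ C * ((1 / 2) ^ n * ‖y‖) := by gcongr; exact hr_norm n
      _ = C * ‖y‖ * (1 / 2) ^ n := by ring
  have hr_tendsto : Tendsto r atTop (𝓝 0) :=
    squeeze_zero_norm hr_norm
      (by simpa using (tendsto_pow_atTop_nhds_zero_of_lt_one (by norm_num) (by norm_num :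
        (1 / 2 : ℝ) < 1)).mul_const ‖y‖)
  have hpartial (n : ℕ) : ∑ k ∈ Finset.range n, T (g (r k)) = y - r n := by
    simpa [hr_succ, r] using Finset.sum_range_sub' r n
  refine ⟨∑' n, g (r n), ?_⟩
  rw [T.map_tsum hsum]
  refine ((hsum.mapL T).hasSum_iff_tendsto_nat.2 ?_).tsum_eq
  simpa [hpartial] using (tendsto_const_nhds (x := y)).sub hr_tendsto

theorem surjective_of_closedBall_subset_closure_image_s7 [NormedSpace ℝ E] [NormedSpace ℝ F]
    (T : F →L[ℝ] E) (h : closedBall (0 : E) 1 ⊆ closure (T '' closedBall 0 1)) :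
    Surjective T := by
  refine T.surjective_of_exists_approx_preimage zero_le_one fun y => ?_
  rcases eq_or_ne y 0 with rfl | hy
  · exact ⟨0, by simp⟩
  have hy' : ‖y‖ ≠ 0 := norm_ne_zero_iff.2 hy
  have hunit : ‖y‖⁻¹ • y ∈ closedBall (0 : E) 1 := by
    simp [norm_smul, inv_mul_cancel₀ hy']
  obtain ⟨_, ⟨x, hx, rfl⟩, hdist⟩ := Metric.mem_closure_iff.1 (h hunit) (1 / 2) (by norm_num)
  refine ⟨‖y‖ • x, ?_, ?_⟩
  · have hscale : y - T (‖y‖ • x) = ‖y‖ • (‖y‖⁻¹ • y - T x) := by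
      rw [smul_sub, smul_inv_smul₀ hy', map_smul]
    rw [hscale, norm_smul, norm_norm, ← dist_eq_norm]
    linarith [mul_le_mul_of_nonneg_left hdist.le (norm_nonneg y)]
  · simpa [norm_smul, mul_comm] using
      mul_le_mul_of_nonneg_left (mem_closedBall_zero_iff.1 hx) (norm_nonneg y)

end ContinuousLinearMap

namespace lp

variable {α 𝕜 E : Type*} [NormedAddCommGroup E]

theorem norm_eq_tsum_norm (x : ℓ¹(α, E)) : ‖x‖ = ∑' i, ‖x i‖ := by
  simpa using norm_eq_tsum_rpow (by simp) x

theorem summable_norm (x : ℓ¹(α, E)) : Summable fun i => ‖x i‖ := by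
  simpa using (lp.memℓp x).summable (by simp)

section Permute

variable [NormedField 𝕜] [NormedSpace 𝕜 E]

variable (𝕜) in
noncomputable def permute (σ : Equiv.Perm α) : ℓ¹(α, E) →ₗᵢ[𝕜] ℓ¹(α, E) where
  toFun x := ⟨fun i => x (σ i),
    memℓp_gen (by simpa [comp_def] using σ.summable_iff.2 (summable_norm x))⟩
  map_add' _ _ := rfl
  map_smul' _ _ := rfl
  norm_map' x := by
    simp only [norm_eq_tsum_norm]
    exact σ.tsum_eq fun i => ‖x i‖

@[simp]
theorem permute_apply (σ : Equiv.Perm α) (x : ℓ¹(α, E)) (i : α) :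
    permute 𝕜 σ x i = x (σ i) := rfl

theorem permute_permute {σ : Equiv.Perm α} (hσ : Involutive σ) (x : ℓ¹(α, E)) :
    permute 𝕜 σ (permute 𝕜 σ x) = x := by
  ext i
  simp [hσ i]

end Permute

section LinearCombination

variable [NontriviallyNormedField 𝕜] [NormedSpace 𝕜 E] [CompleteSpace E]

variable (𝕜) in
noncomputable def linearCombination (z : α → E) {K : ℝ} (hK : 0 ≤ K) (hz : ∀ i, ‖z i‖ ≤ K) :
    ℓ¹(α, 𝕜) →L[𝕜] E :=
  tsumCLM 𝕜 α E ∘L mapCLM 1 (fun i => ContinuousLinearMap.toSpanSingleton 𝕜 (z i)) hK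
    fun i => (ContinuousLinearMap.norm_toSpanSingleton (z i)).trans_le (hz i)

variable (z : α → E) {K : ℝ} (hK : 0 ≤ K) (hz : ∀ i, ‖z i‖ ≤ K)

theorem linearCombination_apply (x : ℓ¹(α, 𝕜)) :
    linearCombination 𝕜 z hK hz x = ∑' i, x i • z i := rfl

theorem norm_linearCombination_le : ‖linearCombination 𝕜 z hK hz‖ ≤ K :=
  (ContinuousLinearMap.opNorm_comp_le _ _).trans <| by
    simpa using mul_le_mul norm_tsumCLM_le (norm_mapCLM_le _ _ hK _) (norm_nonneg _) zero_le_one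

theorem linearCombination_single [DecidableEq α] (i : α) :
    linearCombination 𝕜 z hK hz (lp.single 1 i 1) = z i := by
  rw [linearCombination_apply,
    tsum_eq_single i fun j hj => by rw [lp.single_apply_ne _ _ _ hj, zero_smul]]
  simp

theorem map_linearCombination_eq_permute (T : E →L[𝕜] E) (σ : Equiv.Perm α)
    (hTz : ∀ i, T (z (σ i)) = z i) (x : ℓ¹(α, 𝕜)) :
    T (linearCombination 𝕜 z hK hz x) = linearCombination 𝕜 z hK hz (permute 𝕜 σ x) := by
  have hsum : Summable fun i => x i • z i :=
    .of_norm_bounded ((summable_norm x).mul_right K) fun i => by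
      rw [norm_smul]
      gcongr
      exact hz i
  calc T (linearCombination 𝕜 z hK hz x) = ∑' i, x i • T (z i) := by
        simp [linearCombination_apply, T.map_tsum hsum]
    _ = ∑' i, x (σ i) • T (z (σ i)) := (σ.tsum_eq fun i => x i • T (z i)).symm
    _ = linearCombination 𝕜 z hK hz (permute 𝕜 σ x) := by simp [linearCombination_apply, hTz]

theorem linearCombination_surjective [NormedSpace ℝ E]
    (hdense : closedBall (0 : E) 1 ⊆ closure (range z)) :
    Surjective (linearCombination ℝ z hK hz) := by
  classical
  refine (linearCombination ℝ z hK hz).surjective_of_closedBall_subset_closure_image_s7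
    (hdense.trans (closure_mono ?_))
  rintro _ ⟨i, rfl⟩
  exact ⟨lp.single 1 i 1, by simp [lp.norm_single], linearCombination_single z hK hz i⟩

end LinearCombination

end lp

/-- There is a surjectively universal isometric involution on `ℓ₁`: every continuous linear
isometric involution of a separable real Banach space lifts to it via a surjective
nonexpansive operator. -/
theorem exists_universal_isometric_involution :
    ∃ U : ellOne →L[ℝ] ellOne, (∀ x, U (U x) = x) ∧ (∀ x, ‖U x‖ = ‖x‖) ∧
      ∀ (E : Type) [NormedAddCommGroup E] [NormedSpace ℝ E] [CompleteSpace E]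
        [SeparableSpace E] (f : E →L[ℝ] E),
        (∀ y, f (f y) = y) → (∀ y, ‖f y‖ = ‖y‖) →
        ∃ q : ellOne →L[ℝ] E, Function.Surjective q ∧ ‖q‖ ≤ 1 ∧
          ∀ x : ellOne, f (q x) = q (U x) := by
  -- `e (.inl k) = 2 * k` and `e (.inr k) = 2 * k + 1`, so `σ` swaps `2 * k` and `2 * k + 1`
  let e := Equiv.natSumNatEquivNat
  let σ : Equiv.Perm ℕ := e.permCongr (Equiv.sumComm ℕ ℕ)
  have hσ : Involutive σ := fun n => by simp [σ]
  refine ⟨(lp.permute ℝ σ).toContinuousLinearMap, lp.permute_permute hσ,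
    (lp.permute ℝ σ).norm_map, ?_⟩
  intro E _ _ _ _ f hff hf
  obtain ⟨d, hd_ball, hd_dense⟩ := (IsSeparable.of_separableSpace (closedBall (0 : E) 1))
    |>.exists_seq_dense_subset ⟨0, mem_closedBall_self zero_le_one⟩
  let z : ℕ → E := Sum.elim d (f ∘ d) ∘ e.symm
  have hz (n : ℕ) : ‖z n‖ ≤ 1 := by
    rcases h : e.symm n with k | k <;>
      simpa [z, h, hf] using hd_ball (mem_range_self k)
  have hz_dense : closedBall (0 : E) 1 ⊆ closure (range z) := by
    refine hd_dense.trans (closure_mono ?_)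
    rintro _ ⟨k, rfl⟩
    exact ⟨e (.inl k), by simp [z]⟩
  have hfz (n : ℕ) : f (z (σ n)) = z n := by
    rcases h : e.symm n with k | k <;> simp [z, σ, h, hff]
  exact ⟨lp.linearCombination ℝ z zero_le_one hz, lp.linearCombination_surjective z _ hz hz_dense,
    lp.norm_linearCombination_le z _ hz, lp.map_linearCombination_eq_permute z _ hz f σ hfz⟩
end

section
/- Let X be a countably infinite set and let w : X → X. Then w is surjectively universal if and only if both of the following hold: (I) the equivalence relation on X generated by the relation {(x, w x) : x ∈ X} has infinitely many equivalence classes; and (W) every equivalence class C of this relation is natural, i.e. there exists a surjection r : C → ℕ such that r(w x) = r(x) + 1 for every x ∈ C. -/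
/-- A self-map `w` of a countably infinite set `X` is surjectively universal (every self-map of
a nonempty countable set lifts to it via a surjection) if and only if (I) the functional
digraph of `w` has infinitely many components (equivalence classes of the equivalence relation
generated by `x ~ w x`), and (W) each component `C` is natural, i.e. admits a surjection
`ρ : C → ℕ` with `ρ (w x) = ρ x + 1` on `C`. -/
theorem surjectively_universal_iff (X : Type) [Countable X] [Infinite X] (w : X → X) :
    (∀ (S : Type) [Nonempty S] [Countable S] (f : S → S),
        ∃ q : X → S, Function.Surjective q ∧ q ∘ w = f ∘ q) ↔
    (Infinite (Quotient (Relation.EqvGen.setoid (fun x y => y = w x))) ∧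
      ∀ x : X, ∃ ρ : X → ℕ,
        (∀ y : X, Relation.EqvGen (fun a b => b = w a) x y → ρ (w y) = ρ y + 1) ∧
        (∀ n : ℕ, ∃ y : X, Relation.EqvGen (fun a b => b = w a) x y ∧ ρ y = n)) := by
  constructor
  · intro h
    constructor
    · obtain ⟨q, hq, hcomm⟩ := h ℕ id
      have hconst : ∀ a b, Relation.EqvGen (fun a b => b = w a) a b → q a = q b := by
        intro a b hab
        induction hab with
        | rel a b hr => subst hr; exact (congrFun hcomm a).symm
        | refl => rfl
        | symm _ _ _ ih => exact ih.symm
        | trans _ _ _ _ _ ih1 ih2 => exact ih1.trans ih2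
      have hqbar : Function.Surjective
          (Quotient.lift q hconst :
            Quotient (Relation.EqvGen.setoid (fun x y => y = w x)) → ℕ) := by
        intro n
        obtain ⟨x, hx⟩ := hq n
        exact ⟨Quotient.mk _ x, hx⟩
      exact Infinite.of_injective _ (Function.injective_surjInv hqbar)
    · obtain ⟨q, hq, hcomm⟩ := h ℕ Nat.succ
      intro x
      set A := {n | ∃ y, Relation.EqvGen (fun a b => b = w a) x y ∧ q y = n} with hA
      have hAne : A.Nonempty := ⟨q x, x, Relation.EqvGen.refl x, rfl⟩
      have hmem : sInf A ∈ A := Nat.sInf_mem hAne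
      refine ⟨fun y => q y - sInf A, ?_, ?_⟩
      · intro y hy
        have h1 : q (w y) = q y + 1 := congrFun hcomm y
        have h2 : sInf A ≤ q y := Nat.sInf_le ⟨y, hy, rfl⟩
        show q (w y) - sInf A = (q y - sInf A) + 1
        omega
      · intro n
        obtain ⟨y0, hy0, hq0⟩ := hmem
        have key : ∀ k, Relation.EqvGen (fun a b => b = w a) x (w^[k] y0) ∧
            q (w^[k] y0) = sInf A + k := by
          intro k
          induction k with
          | zero => exact ⟨hy0, hq0⟩
          | succ k ih =>
            rw [Function.iterate_succ_apply']
            refine ⟨Relation.EqvGen.trans _ _ _ ih.1 (Relation.EqvGen.rel _ _ rfl), ?_⟩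
            have := congrFun hcomm (w^[k] y0)
            simp only [Function.comp_apply] at this
            omega
        obtain ⟨he, hqv⟩ := key n
        exact ⟨w^[n] y0, he, show q (w^[n] y0) - sInf A = n by omega⟩
  · rintro ⟨hI, hW⟩
    intro S _ _ f
    obtain ⟨g, hg⟩ := exists_surjective_nat S
    have hc : Countable (Quotient (Relation.EqvGen.setoid (fun x y => y = w x))) :=
      Quotient.mk_surjective.countable
    obtain ⟨e⟩ :=
      nonempty_equiv_of_countable
        (α := Quotient (Relation.EqvGen.setoid (fun x y => y = w x))) (β := ℕ)
    set Q := Quotient (Relation.EqvGen.setoid (fun x y => y = w x)) with hQ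
    let ρ : Q → X → ℕ := fun c => Classical.choose (hW c.out)
    have hρ1 : ∀ (c : Q) y, Relation.EqvGen (fun a b => b = w a) c.out y →
        ρ c (w y) = ρ c y + 1 := fun c => (Classical.choose_spec (hW c.out)).1
    have hρ2 : ∀ (c : Q) n, ∃ y, Relation.EqvGen (fun a b => b = w a) c.out y ∧ ρ c y = n :=
      fun c => (Classical.choose_spec (hW c.out)).2
    set mk : X → Q := Quotient.mk _ with hmk
    have hmkw : ∀ x, mk (w x) = mk x := fun x =>
      Quotient.sound (Relation.EqvGen.symm _ _ (Relation.EqvGen.rel _ _ rfl))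
    refine ⟨fun x => f^[ρ (mk x) x] (g (e (mk x))), ?_, ?_⟩
    · intro s
      obtain ⟨k, hk⟩ := hg s
      obtain ⟨y, hy, hρy⟩ := hρ2 (e.symm k) 0
      have hmky : mk y = e.symm k :=
        ((Quotient.sound hy).symm).trans (Quotient.out_eq (e.symm k))
      refine ⟨y, ?_⟩
      simp only [hmky, hρy, Function.iterate_zero, id_eq, Equiv.apply_symm_apply, hk]
    · funext x
      have hout : Relation.EqvGen (fun a b => b = w a) (mk x).out x :=
        Quotient.exact (Quotient.out_eq (mk x))
      simp only [Function.comp_apply, hmkw, hρ1 (mk x) x hout,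
        Function.iterate_succ_apply']
end

section
/- Let X be a countably infinite set and let w : X → X. Then w is surjectively universal if and only if there exists a surjection p : X → ℕ × ℕ such that p ∘ w = ν ∘ p, where ν : ℕ × ℕ → ℕ × ℕ is defined by ν(m, n) = (m + 1, n). -/
/-- A self-map `w` of a countably infinite set `X` is surjectively universal (every self-map of
a nonempty countable set lifts to it via a surjection) if and only if there is a surjection
`p : X → ℕ × ℕ` with `p ∘ w = ν ∘ p`, where `ν (m, n) = (m + 1, n)`. -/
theorem surjectively_universal_iff_lifts_shift (X : Type) [Countable X] [Infinite X]
    (w : X → X) :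
    (∀ (S : Type) [Nonempty S] [Countable S] (f : S → S),
        ∃ q : X → S, Function.Surjective q ∧ q ∘ w = f ∘ q) ↔
    ∃ p : X → ℕ × ℕ, Function.Surjective p ∧
      p ∘ w = (fun mn : ℕ × ℕ => (mn.1 + 1, mn.2)) ∘ p := by
  constructor
  · intro h
    exact h (ℕ × ℕ) (fun mn => (mn.1 + 1, mn.2))
  · rintro ⟨p, hps, hpw⟩ S _ _ f
    obtain ⟨e, he⟩ := exists_surjective_nat S
    refine ⟨fun x => f^[(p x).1] (e (p x).2), ?_, ?_⟩
    · intro s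
      obtain ⟨n, hn⟩ := he s
      obtain ⟨x, hx⟩ := hps (0, n)
      exact ⟨x, by simp [hx, hn]⟩
    · funext x
      have hx : p (w x) = ((p x).1 + 1, (p x).2) := congrFun hpw x
      simp [Function.comp, hx, Function.iterate_succ_apply']
end

section
/- Let X be a countable set and let w : X → X be a self-map such that infinitely many components of w are natural. Then for every nonempty countable set S and every map f : S → S having a fixed point (there exists s₀ ∈ S with f(s₀) = s₀), there exists a surjection q : X → S with q ∘ w = f ∘ q. -/
/-- If `w` is a self-map of a countable set `X` with infinitely many natural components
(equivalence classes of the equivalence relation generated by `x ~ w x` admitting a surjection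
`ρ` onto `ℕ` with `ρ (w x) = ρ x + 1`), then every self-map with a fixed point of a nonempty
countable set lifts to `w` via a surjection. -/
theorem lifts_maps_with_fixed_point (X : Type) [Countable X] (w : X → X)
    (hnat : {c : Quotient (Relation.EqvGen.setoid (fun x y => y = w x)) |
        ∃ x : X, Quotient.mk (Relation.EqvGen.setoid (fun x y => y = w x)) x = c ∧
          ∃ ρ : X → ℕ,
            (∀ y : X, Relation.EqvGen (fun a b => b = w a) x y → ρ (w y) = ρ y + 1) ∧
            (∀ n : ℕ, ∃ y : X, Relation.EqvGen (fun a b => b = w a) x y ∧ ρ y = n)}.Infinite) :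
    ∀ (S : Type) [Nonempty S] [Countable S] (f : S → S), (∃ s₀ : S, f s₀ = s₀) →
      ∃ q : X → S, Function.Surjective q ∧ q ∘ w = f ∘ q := by
  classical
  intro S _ _ f hf
  obtain ⟨s₀, hs₀⟩ := hf
  obtain ⟨e, he⟩ := exists_surjective_nat S
  set st := Relation.EqvGen.setoid (fun x y : X => y = w x) with hst
  set E := hnat.natEmbedding with hE
  set g : ℕ → Quotient st := fun n => (E n).1 with hgdef
  have hg_inj : Function.Injective g := fun a b h =>
    E.injective (Subtype.ext h)
  have hg_mem : ∀ n, ∃ x : X, Quotient.mk st x = g n ∧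
      ∃ ρ : X → ℕ,
        (∀ y : X, Relation.EqvGen (fun a b => b = w a) x y → ρ (w y) = ρ y + 1) ∧
        (∀ m : ℕ, ∃ y : X, Relation.EqvGen (fun a b => b = w a) x y ∧ ρ y = m) :=
    fun n => (E n).2
  choose xb hxb ρ hρ1 hρ2 using hg_mem
  set q : X → S := fun x =>
    if h : ∃ n, Quotient.mk st x = g n then (f^[ρ h.choose x]) (e h.choose) else s₀
    with hq
  have hch : ∀ (x : X) (h : ∃ m, Quotient.mk st x = g m) (n : ℕ),
      Quotient.mk st x = g n → h.choose = n :=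
    fun x h n hn => hg_inj (h.choose_spec.symm.trans hn)
  have hwmk : ∀ x : X, Quotient.mk st (w x) = Quotient.mk st x := fun x =>
    Quotient.sound (Relation.EqvGen.symm _ _ (Relation.EqvGen.rel x (w x) rfl))
  refine ⟨q, ?_, ?_⟩
  · intro s
    obtain ⟨m, rfl⟩ := he s
    obtain ⟨y, hy1, hy2⟩ := hρ2 m 0
    have hmk : Quotient.mk st y = g m := (Quotient.sound hy1).symm.trans (hxb m)
    have hex : ∃ n, Quotient.mk st y = g n := ⟨m, hmk⟩
    refine ⟨y, ?_⟩
    rw [hq]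
    simp only [dif_pos hex, hch y hex m hmk, hy2, Function.iterate_zero_apply]
  · funext x
    simp only [Function.comp_apply]
    by_cases h : ∃ n, Quotient.mk st x = g n
    · obtain ⟨n, hn⟩ := h
      have h1 : ∃ m, Quotient.mk st x = g m := ⟨n, hn⟩
      have h2 : ∃ m, Quotient.mk st (w x) = g m := ⟨n, (hwmk x).trans hn⟩
      have hEx : Relation.EqvGen (fun a b : X => b = w a) (xb n) x :=
        Quotient.exact ((hxb n).trans hn.symm)
      rw [hq]
      simp only [dif_pos h1, dif_pos h2, hch x h1 n hn,
        hch (w x) h2 n ((hwmk x).trans hn), hρ1 n x hEx, Function.iterate_succ_apply']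
    · have h2 : ¬ ∃ n, Quotient.mk st (w x) = g n := by
        intro ⟨n, hn⟩; exact h ⟨n, (hwmk x).symm.trans hn⟩
      rw [hq]
      simp only [dif_neg h, dif_neg h2, hs₀]
end
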